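/- arXiv:1405.4809 — 5 statements merged into one kernel-verified Lean document; each statement's English description precedes it below -/
import Mathlib

section
/- Let f : X → (-∞,+∞] be a c-antiderivative of a multivalued mapping M : X ⇉ Y, and let S be a nonempty subset of dom(M). Then the family 𝒜_{[c,f|_S,M]} is nonempty; that is, there exists a c-convex function h : X → (-∞,+∞] such that G(M) ⊆ G(∂_c h) and h|_S = f|_S. -/
noncomputable section

open scoped Classical

variable {X Y : Type*}

/-- The `c`-transform of `f : X → EReal`, a function on `Y`:
`f^c(y) = sup_{x ∈ X} (c(x,y) - f(x))`. The `c`-transform of a function on `Y` is obtained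
by applying this to the swapped coupling `fun y x => c x y`. -/
def cTransform (c : X → Y → ℝ) (f : X → EReal) : Y → EReal :=
  fun y => ⨆ x, ((c x y : EReal) - f x)

/-- `f` is proper: it takes no value `-∞` (i.e. maps into `(-∞, +∞]`) and is finite somewhere. -/
def ProperFn (f : X → EReal) : Prop :=
  (∀ x, f x ≠ ⊥) ∧ ∃ x, f x ≠ ⊤

/-- `f` is `c`-convex: it is proper and is the `c`-transform of some proper
`g : Y → (-∞, +∞]`. -/
def IsCConvex (c : X → Y → ℝ) (f : X → EReal) : Prop :=
  ProperFn f ∧ ∃ g : Y → EReal, ProperFn g ∧ f = cTransform (fun y x => c x y) g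

/-- The `c`-subdifferential of `f`:
`∂_c f(x) = { y | ∀ x', f(x) + c(x',y) ≤ f(x') + c(x,y) }`. -/
def cSubdiff (c : X → Y → ℝ) (f : X → EReal) (x : X) : Set Y :=
  { y | ∀ x', f x + (c x' y : EReal) ≤ f x' + (c x y : EReal) }

/-- The domain of a multivalued mapping `M : X ⇉ Y`. -/
def mapDom (M : X → Set Y) : Set X := { x | (M x).Nonempty }

/-- The inverse multivalued mapping `M⁻¹ : Y ⇉ X`. -/
def mapInv (M : X → Set Y) : Y → Set X := fun y => { x | y ∈ M x }

/-- The image `M(S) = ⋃_{s ∈ S} M(s)` of a set `S` under a multivalued mapping. -/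
def mapImageOn (M : X → Set Y) (S : Set X) : Set Y := { y | ∃ s ∈ S, y ∈ M s }

/-- The image `Im(M) = ⋃_{x ∈ X} M(x)` of a multivalued mapping. -/
def mapIm (M : X → Set Y) : Set Y := { y | ∃ x, y ∈ M x }

/-- `f` is a `c`-antiderivative of `M`: `f` is proper and `G(M) ⊆ G(∂_c f)`. -/
def IsCAntiderivative (c : X → Y → ℝ) (f : X → EReal) (M : X → Set Y) : Prop :=
  ProperFn f ∧ ∀ x y, y ∈ M x → y ∈ cSubdiff c f x

/-- The family `𝒜_{[c, f|_S, M]}` of all `c`-convex `c`-antiderivatives of `M`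
which coincide with `f` on `S`. -/
def cFamily (c : X → Y → ℝ) (f : X → EReal) (S : Set X) (M : X → Set Y) :
    Set (X → EReal) :=
  { h | IsCConvex c h ∧ (∀ x y, y ∈ M x → y ∈ cSubdiff c h x) ∧ ∀ s ∈ S, h s = f s }

/-- The upper envelope `γ_{[c, f|_S, M]}`. -/
def upperEnv (c : X → Y → ℝ) (f : X → EReal) (S : Set X) (M : X → Set Y) : X → EReal :=
  fun x => ⨆ h ∈ cFamily c f S M, h x

/-- The lower envelope `α_{[c, f|_S, M]}`. -/
def lowerEnv (c : X → Y → ℝ) (f : X → EReal) (S : Set X) (M : X → Set Y) : X → EReal :=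
  fun x => ⨅ h ∈ cFamily c f S M, h x

/-- The indicator function `ι_A` (0 on `A`, `+∞` off `A`). -/
def indicatorE (A : Set X) : X → EReal := fun x => if x ∈ A then 0 else ⊤

/-- Rockafellar's function `R_{[c,M,s]}`: the supremum over `n ≥ 1` and chains
`x_1 = s`, `x_{n+1} = x`, `{(x_i, y_i)}_{i=1}^n ⊆ G(M)` of
`Σ_{i=1}^n [c(x_{i+1}, y_i) - c(x_i, y_i)]` (0-indexed below). -/
def rockafellar (c : X → Y → ℝ) (M : X → Set Y) (s : X) : X → EReal := fun x =>
  ⨆ (n : ℕ) (_ : 0 < n) (xs : ℕ → X) (ys : ℕ → Y)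
      (_ : xs 0 = s ∧ ∀ i < n, ys i ∈ M (xs i)),
    (((∑ i ∈ Finset.range n,
        (c (if i + 1 < n then xs (i + 1) else x) (ys i) - c (xs i) (ys i))) : ℝ) : EReal)

/-- `M` is cyclically monotone of order `n` with respect to `c`: for any `n` pairs
`{(x_i, y_i)}_{i=1}^n ⊆ G(M)`, setting `x_{n+1} = x_1`,
`0 ≤ Σ_{i=1}^n [c(x_i,y_i) - c(x_{i+1},y_i)]` (0-indexed below, cyclically). -/
def IsNCMonotone (c : X → Y → ℝ) (M : X → Set Y) (n : ℕ) : Prop :=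
  ∀ (xs : ℕ → X) (ys : ℕ → Y), (∀ i < n, ys i ∈ M (xs i)) →
    0 ≤ ∑ i ∈ Finset.range n, (c (xs i) (ys i) - c (xs ((i + 1) % n)) (ys i))

/-- `M` is `c`-cyclically monotone: `n`-`c`-monotone for all `n`. -/
def IsCCyclicallyMonotone (c : X → Y → ℝ) (M : X → Set Y) : Prop :=
  ∀ n : ℕ, IsNCMonotone c M n

/-!
The witness is the double `c`-transform `f^{cc}`. It always lies below `f`, and whenever
`y ∈ ∂_c f(x)` the `c`-Fenchel–Young inequality `f(x) + f^c(y) ≥ c(x,y)` is an equality;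
this forces `f^{cc}(x) = f(x)` and makes the inequality an equality for `f^{cc}` as well, which
means `y ∈ ∂_c f^{cc}(x)`. A single such pair makes `f^c` and `f^{cc}` proper when `f` is.
-/

namespace EReal

lemma coe_sub_sub_cancel (a : ℝ) (u : EReal) : (a : EReal) - (a - u) = u := by
  induction u <;> simp [← EReal.coe_sub]

lemma coe_sub_ne_bot (a : ℝ) {u : EReal} (hu : u ≠ ⊤) : (a : EReal) - u ≠ ⊥ := by
  induction u <;> simp_all [← EReal.coe_sub]

lemma coe_sub_ne_top (a : ℝ) {u : EReal} (hu : u ≠ ⊥) : (a : EReal) - u ≠ ⊤ := by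
  induction u <;> simp_all [← EReal.coe_sub]

lemma coe_sub_add_comm (a b : ℝ) (u : EReal) : (a - u) + b = (b - u) + a := by
  rw [sub_eq_add_neg, sub_eq_add_neg]
  ac_rfl

lemma coe_sub_le_comm {u v : EReal} {a : ℝ} (h : (a : EReal) - v ≤ u) :
    (a : EReal) - u ≤ v := by
  induction u <;> induction v <;> simp_all [← EReal.coe_sub]
  linarith

lemma coe_sub_le_coe_sub_of_add_le {u v : EReal} {a b : ℝ} (h : u + a ≤ v + b) :
    (a : EReal) - v ≤ b - u := by
  induction u <;> induction v <;> simp_all [← EReal.coe_add, ← EReal.coe_sub]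
  linarith

end EReal

section CTransform

variable {c : X → Y → ℝ} {f : X → EReal} {x : X} {y : Y}

lemma coe_sub_le_cTransform (c : X → Y → ℝ) (f : X → EReal) (x : X) (y : Y) :
    (c x y : EReal) - f x ≤ cTransform c f y :=
  le_iSup (fun x' => (c x' y : EReal) - f x') x

lemma cTransform_ne_bot (hx : f x ≠ ⊤) (y : Y) : cTransform c f y ≠ ⊥ :=
  ne_bot_of_le_ne_bot (EReal.coe_sub_ne_bot _ hx) (coe_sub_le_cTransform c f x y)

lemma cTransform_cTransform_le (c : X → Y → ℝ) (f : X → EReal) :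
    cTransform (fun y x => c x y) (cTransform c f) ≤ f :=
  fun x => iSup_le fun y => EReal.coe_sub_le_comm (coe_sub_le_cTransform c f x y)

lemma cTransform_eq_of_mem_cSubdiff (hy : y ∈ cSubdiff c f x) :
    cTransform c f y = c x y - f x :=
  le_antisymm (iSup_le fun x' => EReal.coe_sub_le_coe_sub_of_add_le (hy x'))
    (coe_sub_le_cTransform c f x y)

lemma cTransform_cTransform_eq_of_mem_cSubdiff (hy : y ∈ cSubdiff c f x) :
    cTransform (fun y x => c x y) (cTransform c f) x = f x := by
  refine le_antisymm (cTransform_cTransform_le c f x) ?_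
  calc f x = (c x y : EReal) - cTransform c f y := by
        rw [cTransform_eq_of_mem_cSubdiff hy, EReal.coe_sub_sub_cancel]
    _ ≤ _ := coe_sub_le_cTransform (fun y x => c x y) (cTransform c f) y x

lemma mem_cSubdiff_cTransform_of_eq {g : Y → EReal}
    (hx : cTransform (fun y x => c x y) g x = c x y - g y) :
    y ∈ cSubdiff c (cTransform (fun y x => c x y) g) x := by
  intro x'
  rw [hx, EReal.coe_sub_add_comm]
  exact add_le_add_left (coe_sub_le_cTransform (fun y x => c x y) g y x') _

lemma mem_cSubdiff_cTransform_cTransform (hy : y ∈ cSubdiff c f x) :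
    y ∈ cSubdiff c (cTransform (fun y x => c x y) (cTransform c f)) x := by
  apply mem_cSubdiff_cTransform_of_eq
  rw [cTransform_cTransform_eq_of_mem_cSubdiff hy, cTransform_eq_of_mem_cSubdiff hy,
    EReal.coe_sub_sub_cancel]

lemma ProperFn.ne_top_of_mem_cSubdiff (hf : ProperFn f) (hy : y ∈ cSubdiff c f x) :
    f x ≠ ⊤ := by
  obtain ⟨x₁, hx₁⟩ := hf.2
  intro hx
  have hsum : f x₁ + (c x y : EReal) = ⊤ := by
    simpa [hx] using hy x₁
  exact (EReal.add_lt_top hx₁ (EReal.coe_ne_top _)).ne hsum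

lemma ProperFn.isCConvex_cTransform_cTransform (hf : ProperFn f) (hy : y ∈ cSubdiff c f x) :
    IsCConvex c (cTransform (fun y x => c x y) (cTransform c f)) := by
  obtain ⟨x₁, hx₁⟩ := hf.2
  have hgy : cTransform c f y ≠ ⊤ := by
    rw [cTransform_eq_of_mem_cSubdiff hy]
    exact EReal.coe_sub_ne_top _ (hf.1 x)
  refine ⟨⟨cTransform_ne_bot hgy, x, ?_⟩, cTransform c f,
    ⟨cTransform_ne_bot hx₁, y, hgy⟩, rfl⟩
  rw [cTransform_cTransform_eq_of_mem_cSubdiff hy]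
  exact hf.ne_top_of_mem_cSubdiff hy

end CTransform

theorem statement0_general (c : X → Y → ℝ) (f : X → EReal)
    (M : X → Set Y) (hf : IsCAntiderivative c f M)
    (S : Set X) (hS : S.Nonempty) (hSdom : S ⊆ mapDom M) :
    (cFamily c f S M).Nonempty := by
  obtain ⟨s, hs⟩ := hS
  obtain ⟨y, hy⟩ := hSdom hs
  exact ⟨cTransform (fun y x => c x y) (cTransform c f),
    hf.1.isCConvex_cTransform_cTransform (hf.2 s y hy),
    fun x y hxy => mem_cSubdiff_cTransform_cTransform (hf.2 x y hxy),
    fun s hs => cTransform_cTransform_eq_of_mem_cSubdiff (hf.2 s _ (hSdom hs).some_mem)⟩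

/-- If `f` is a `c`-antiderivative of `M` and `∅ ≠ S ⊆ dom M`, then the family
`𝒜_{[c, f|_S, M]}` is nonempty. -/
theorem statement0 [Nonempty X] [Nonempty Y] (c : X → Y → ℝ) (f : X → EReal)
    (M : X → Set Y) (hf : IsCAntiderivative c f M)
    (S : Set X) (hS : S.Nonempty) (hSdom : S ⊆ mapDom M) :
    (cFamily c f S M).Nonempty :=
  statement0_general c f M hf S hS hSdom
end
end

section
/- Let f : X → (-∞,+∞] be a c-antiderivative of a multivalued mapping M : X ⇉ Y and take S = dom(M). If h : X → (-∞,+∞] is c-convex, then h ∈ 𝒜_{[c,f|_{dom(M)},M]} if and only if α_{[c,f|_{dom(M)},M]} ≤ h ≤ γ_{[c,f|_{dom(M)},M]} pointwise, where α and γ denote the pointwise infimum and supremum of the family 𝒜_{[c,f|_{dom(M)},M]}. -/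
noncomputable section

open scoped Classical

variable {X Y : Type*}

/-!
Every member of the family agrees with `f` on `dom M`, so a function squeezed between the
envelopes agrees with `f` there as well. The `c`-subdifferential inequality at a point of
`dom M`, in the form `f x + c(x', y) - c(x, y) ≤ g x'`, holds for every member `g` and hence
passes to the lower envelope, and from it to any `h ≥ α`.
-/

section Envelopes

variable {c : X → Y → ℝ} {f : X → EReal} {S : Set X} {M : X → Set Y}

theorem lowerEnv_le {h : X → EReal} (hh : h ∈ cFamily c f S M) (x : X) :
    lowerEnv c f S M x ≤ h x :=
  iInf₂_le h hh

theorem le_upperEnv {h : X → EReal} (hh : h ∈ cFamily c f S M) (x : X) :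
    h x ≤ upperEnv c f S M x :=
  le_iSup₂ (f := fun g _ => g x) h hh

theorem eq_of_lowerEnv_le_of_le_upperEnv {h : X → EReal} {s : X} (hs : s ∈ S)
    (hlo : lowerEnv c f S M s ≤ h s) (hup : h s ≤ upperEnv c f S M s) : h s = f s := by
  have hf_le : f s ≤ lowerEnv c f S M s := le_iInf₂ fun g hg => (hg.2.2 s hs).ge
  have le_hf : upperEnv c f S M s ≤ f s := iSup₂_le fun g hg => (hg.2.2 s hs).le
  exact le_antisymm (hup.trans le_hf) (hf_le.trans hlo)

theorem add_le_lowerEnv_add {x : X} {y : Y} (hx : x ∈ S) (hy : y ∈ M x) (x' : X) :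
    f x + (c x' y : EReal) ≤ lowerEnv c f S M x' + (c x y : EReal) := by
  rw [← EReal.sub_le_iff_le_add (by simp) (by simp)]
  refine le_iInf₂ fun g hg => ?_
  rw [EReal.sub_le_iff_le_add (by simp) (by simp), ← hg.2.2 x hx]
  exact hg.2.1 x y hy x'

theorem mem_cSubdiff_of_lowerEnv_le {h : X → EReal} {x : X} {y : Y} (hx : x ∈ S)
    (hy : y ∈ M x) (hhx : h x = f x) (hlo : ∀ x', lowerEnv c f S M x' ≤ h x') :
    y ∈ cSubdiff c h x := fun x' => by
  rw [hhx]
  exact (add_le_lowerEnv_add hx hy x').trans (add_le_add_left (hlo x') _)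

end Envelopes

theorem statement8_general (c : X → Y → ℝ) (f : X → EReal)
    (M : X → Set Y)
    (h : X → EReal) (hconv : IsCConvex c h) :
    h ∈ cFamily c f (mapDom M) M ↔
      ∀ x, lowerEnv c f (mapDom M) M x ≤ h x ∧ h x ≤ upperEnv c f (mapDom M) M x := by
  refine ⟨fun hh x => ⟨lowerEnv_le hh x, le_upperEnv hh x⟩, fun hb => ?_⟩
  have h_eq_f : ∀ s ∈ mapDom M, h s = f s := fun s hs =>
    eq_of_lowerEnv_le_of_le_upperEnv hs (hb s).1 (hb s).2
  refine ⟨hconv, fun x y hy => ?_, h_eq_f⟩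
  have hx : x ∈ mapDom M := ⟨y, hy⟩
  exact mem_cSubdiff_of_lowerEnv_le hx hy (h_eq_f x hx) fun x' => (hb x').1

/-- In the case `S = dom M`, a `c`-convex `h` belongs to
`𝒜_{[c, f|_{dom M}, M]}` iff `α_{[c, f|_{dom M}, M]} ≤ h ≤ γ_{[c, f|_{dom M}, M]}`. -/
theorem statement8 [Nonempty X] [Nonempty Y] (c : X → Y → ℝ) (f : X → EReal)
    (M : X → Set Y) (hf : IsCAntiderivative c f M)
    (hdom : (mapDom M).Nonempty)
    (h : X → EReal) (hconv : IsCConvex c h) :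
    h ∈ cFamily c f (mapDom M) M ↔
      ∀ x, lowerEnv c f (mapDom M) M x ≤ h x ∧ h x ≤ upperEnv c f (mapDom M) M x :=
  statement8_general c f M h hconv
end
end

section
/- A proper multivalued mapping M : X ⇉ Y is c-cyclically monotone if and only if it has a proper c-antiderivative. Moreover, for any s ∈ dom(M), Rockafellar's function R_{[c,M,s]} is proper if and only if M is proper and c-cyclically monotone. -/
noncomputable section

open scoped Classical

variable {X Y : Type*}

/-! If `M` has a proper `c`-antiderivative `f`, summing the subdifferential
inequalities `f(x_i) + c(x_{i+1}, y_i) ≤ f(x_{i+1}) + c(x_i, y_i)` around a cycle makes the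
values of `f` telescope away, which is `c`-cyclic monotonicity. Conversely, extending a chain
from `s` to `x` by one more pair `(x, y) ∈ G(M)` shows that Rockafellar's function always
satisfies the subdifferential inequalities along `G(M)`, and is never `-∞`; cyclic monotonicity
is exactly the statement that chains closing up at `s` have nonpositive sum, so `R(s) ≤ 0` and
`R` is proper. -/

namespace Rockafellar

variable {c : X → Y → ℝ} {M : X → Set Y} {s x : X} {y : Y}

/-- The summand of `rockafellar`: the chain `(xs i, ys i)_{i < n}` continued to `x`. -/
def chainSum (c : X → Y → ℝ) (xs : ℕ → X) (ys : ℕ → Y) (n : ℕ) (x : X) : ℝ :=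
  ∑ i ∈ Finset.range n, (c (if i + 1 < n then xs (i + 1) else x) (ys i) - c (xs i) (ys i))

lemma chainSum_succ (xs : ℕ → X) (ys : ℕ → Y) (n : ℕ) (x : X) :
    chainSum c xs ys (n + 1) x = chainSum c xs ys n (xs n) + (c x (ys n) - c (xs n) (ys n)) := by
  rw [chainSum, chainSum, Finset.sum_range_succ, if_neg (lt_irrefl _)]
  congr 1
  refine Finset.sum_congr rfl fun i hi => ?_
  have hi : i < n := Finset.mem_range.mp hi
  by_cases h : i + 1 < n
  · rw [if_pos h, if_pos (by omega)]
  · rw [if_neg h, if_pos (by omega), show i + 1 = n by omega]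

lemma chainSum_congr {xs xs' : ℕ → X} {ys ys' : ℕ → Y} {n : ℕ} (hxs : ∀ i < n, xs i = xs' i)
    (hys : ∀ i < n, ys i = ys' i) (x : X) : chainSum c xs ys n x = chainSum c xs' ys' n x := by
  refine Finset.sum_congr rfl fun i hi => ?_
  have hi : i < n := Finset.mem_range.mp hi
  split_ifs with h
  · rw [hxs i hi, hxs (i + 1) h, hys i hi]
  · rw [hxs i hi, hys i hi]

lemma chainSum_self (xs : ℕ → X) (ys : ℕ → Y) (n : ℕ) :
    chainSum c xs ys n (xs 0) =
      -∑ i ∈ Finset.range n, (c (xs i) (ys i) - c (xs ((i + 1) % n)) (ys i)) := by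
  rw [chainSum, ← Finset.sum_neg_distrib]
  refine Finset.sum_congr rfl fun i hi => ?_
  have hi : i < n := Finset.mem_range.mp hi
  by_cases h : i + 1 < n
  · rw [if_pos h, Nat.mod_eq_of_lt h, neg_sub]
  · rw [if_neg h, show i + 1 = n by omega, Nat.mod_self, neg_sub]

lemma chainSum_le_rockafellar {n : ℕ} {xs : ℕ → X} {ys : ℕ → Y} (hn : 0 < n) (h0 : xs 0 = s)
    (hG : ∀ i < n, ys i ∈ M (xs i)) (x : X) :
    (chainSum c xs ys n x : EReal) ≤ rockafellar c M s x :=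
  le_iSup_of_le n <| le_iSup_of_le hn <| le_iSup_of_le xs <| le_iSup_of_le ys <|
    le_iSup_of_le ⟨h0, hG⟩ le_rfl

lemma rockafellar_le {b : EReal}
    (h : ∀ n, 0 < n → ∀ (xs : ℕ → X) (ys : ℕ → Y), xs 0 = s → (∀ i < n, ys i ∈ M (xs i)) →
      (chainSum c xs ys n x : EReal) ≤ b) :
    rockafellar c M s x ≤ b :=
  iSup_le fun n => iSup_le fun hn => iSup_le fun xs => iSup_le fun ys =>
    iSup_le fun hch => h n hn xs ys hch.1 hch.2

lemma chainSum_add_le_rockafellar {n : ℕ} {xs : ℕ → X} {ys : ℕ → Y} (hn : 0 < n)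
    (h0 : xs 0 = s) (hG : ∀ i < n, ys i ∈ M (xs i)) (hy : y ∈ M x) (x' : X) :
    ((chainSum c xs ys n x + (c x' y - c x y) : ℝ) : EReal) ≤ rockafellar c M s x' := by
  have hchain := chainSum_le_rockafellar (c := c) (M := M) (n := n + 1)
    (xs := Function.update xs n x) (ys := Function.update ys n y) n.succ_pos
    (by rw [Function.update_of_ne hn.ne, h0]) (fun i hi => ?_) x'
  · rwa [chainSum_succ, Function.update_self, Function.update_self,
      chainSum_congr (fun i hi => Function.update_of_ne hi.ne _ _)
        (fun i hi => Function.update_of_ne hi.ne _ _)] at hchain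
  · rcases Nat.lt_succ_iff_lt_or_eq.mp hi with hi | rfl
    · rw [Function.update_of_ne hi.ne, Function.update_of_ne hi.ne]; exact hG i hi
    · rwa [Function.update_self, Function.update_self]

lemma rockafellar_add_le (hy : y ∈ M x) (x' : X) :
    rockafellar c M s x + c x' y ≤ rockafellar c M s x' + c x y := by
  refine (EReal.le_sub_iff_add_le (.inl (EReal.coe_ne_bot _)) (.inl (EReal.coe_ne_top _))).mp
    (rockafellar_le fun n hn xs ys h0 hG => ?_)
  refine (EReal.le_sub_iff_add_le (.inl (EReal.coe_ne_bot _)) (.inl (EReal.coe_ne_top _))).mpr ?_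
  calc (chainSum c xs ys n x : EReal) + c x' y
      = ((chainSum c xs ys n x + (c x' y - c x y) : ℝ) : EReal) + c x y := by
        norm_cast; ring
    _ ≤ rockafellar c M s x' + c x y := by
        gcongr; exact chainSum_add_le_rockafellar hn h0 hG hy x'

lemma rockafellar_ne_bot (hs : s ∈ mapDom M) (x : X) : rockafellar c M s x ≠ ⊥ := by
  obtain ⟨y₀, hy₀⟩ := hs
  exact ne_bot_of_le_ne_bot (EReal.coe_ne_bot _)
    (chainSum_le_rockafellar (xs := fun _ => s) (ys := fun _ => y₀) one_pos rfl
      (fun _ _ => hy₀) x)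

lemma rockafellar_self_nonpos (hcm : IsCCyclicallyMonotone c M) : rockafellar c M s s ≤ 0 :=
  rockafellar_le fun n _ xs ys h0 hG => by
    rw [← h0, chainSum_self, ← EReal.coe_zero, EReal.coe_le_coe_iff, neg_nonpos]
    exact hcm n xs ys hG

lemma properFn_rockafellar (hs : s ∈ mapDom M) (hcm : IsCCyclicallyMonotone c M) :
    ProperFn (rockafellar c M s) :=
  ⟨rockafellar_ne_bot hs, s, ((rockafellar_self_nonpos hcm).trans_lt EReal.zero_lt_top).ne⟩

lemma isCAntiderivative_rockafellar (hp : ProperFn (rockafellar c M s)) :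
    IsCAntiderivative c (rockafellar c M s) M :=
  ⟨hp, fun _ _ hy x' => rockafellar_add_le hy x'⟩

end Rockafellar

lemma Finset.sum_range_comp_succ_mod (g : ℕ → ℝ) (n : ℕ) :
    ∑ i ∈ Finset.range n, g ((i + 1) % n) = ∑ i ∈ Finset.range n, g i := by
  cases n with
  | zero => simp
  | succ m =>
    rw [Finset.sum_range_succ, Finset.sum_range_succ', Nat.mod_self]
    congr 1
    refine Finset.sum_congr rfl fun i hi => ?_
    rw [Nat.mod_eq_of_lt (by simpa using hi)]

namespace IsCAntiderivative

variable {c : X → Y → ℝ} {M : X → Set Y} {f : X → EReal} {x x' : X} {y y' : Y}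

lemma ne_top (hf : IsCAntiderivative c f M) (hy : y ∈ M x) : f x ≠ ⊤ := by
  obtain ⟨⟨-, x₀, hx₀⟩, hsub⟩ := hf
  intro htop
  have h := hsub x y hy x₀
  rw [htop, EReal.top_add_coe] at h
  exact EReal.add_ne_top hx₀ (EReal.coe_ne_top _) (top_le_iff.mp h)

lemma toReal_add_le (hf : IsCAntiderivative c f M) (hy : y ∈ M x) (hy' : y' ∈ M x') :
    (f x).toReal + c x' y ≤ (f x').toReal + c x y := by
  have h := hf.2 x y hy x'
  rwa [← EReal.coe_toReal (hf.ne_top hy) (hf.1.1 x), ← EReal.coe_toReal (hf.ne_top hy') (hf.1.1 x'),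
    ← EReal.coe_add, ← EReal.coe_add, EReal.coe_le_coe_iff] at h

lemma isCCyclicallyMonotone (hf : IsCAntiderivative c f M) : IsCCyclicallyMonotone c M := by
  intro n xs ys hG
  rcases Nat.eq_zero_or_pos n with rfl | hn
  · simp
  have hstep : ∀ i ∈ Finset.range n,
      (f (xs i)).toReal + c (xs ((i + 1) % n)) (ys i) ≤
        (f (xs ((i + 1) % n))).toReal + c (xs i) (ys i) := fun i hi =>
    hf.toReal_add_le (hG i (Finset.mem_range.mp hi)) (hG _ (Nat.mod_lt _ hn))
  have hsum := Finset.sum_le_sum hstep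
  rw [Finset.sum_add_distrib, Finset.sum_add_distrib,
    Finset.sum_range_comp_succ_mod (fun i => (f (xs i)).toReal)] at hsum
  rw [Finset.sum_sub_distrib]
  linarith

end IsCAntiderivative

open Rockafellar in
theorem statement10_general (c : X → Y → ℝ) (M : X → Set Y)
    (hM : (mapDom M).Nonempty) :
    (IsCCyclicallyMonotone c M ↔ ∃ f : X → EReal, IsCAntiderivative c f M) ∧
      ∀ s ∈ mapDom M,
        (ProperFn (rockafellar c M s) ↔
          (mapDom M).Nonempty ∧ IsCCyclicallyMonotone c M) := by
  refine ⟨⟨fun hcm => ?_, fun ⟨_, hf⟩ => hf.isCCyclicallyMonotone⟩, fun s hs => ?_⟩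
  · obtain ⟨s, hs⟩ := hM
    exact ⟨_, isCAntiderivative_rockafellar (properFn_rockafellar hs hcm)⟩
  · exact ⟨fun hp => ⟨hM, (isCAntiderivative_rockafellar hp).isCCyclicallyMonotone⟩,
      fun ⟨_, hcm⟩ => properFn_rockafellar hs hcm⟩

/-- A proper mapping `M` is `c`-cyclically monotone iff it has a proper
`c`-antiderivative; moreover, for any `s ∈ dom M`, Rockafellar's function `R_{[c,M,s]}`
is proper iff `M` is proper and `c`-cyclically monotone. -/
theorem statement10 [Nonempty X] [Nonempty Y] (c : X → Y → ℝ) (M : X → Set Y)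
    (hM : (mapDom M).Nonempty) :
    (IsCCyclicallyMonotone c M ↔ ∃ f : X → EReal, IsCAntiderivative c f M) ∧
      ∀ s ∈ mapDom M,
        (ProperFn (rockafellar c M s) ↔
          (mapDom M).Nonempty ∧ IsCCyclicallyMonotone c M) :=
  statement10_general c M hM
end
end

section
/- Let (X,d) be a metric space and let f : X → (-∞,+∞] be a proper function. The following assertions are equivalent: (1) f is 1-Lipschitz; (2) f^{−d} = −f; (3) f is (−d)-convex; (4) f is a (−d)-antiderivative of the identity mapping I : X → X, i.e., G(I) ⊆ G(∂_{−d} f). In any of these cases f is real-valued (takes no infinite values). -/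
noncomputable section

open scoped Classical

variable {X Y : Type*}

/-- A proper `f : X → (-∞,+∞]` is `1`-Lipschitz: it is real-valued and
`|f(x) - f(y)| ≤ d(x,y)` for all `x, y`. -/
def IsLip1E {X : Type*} [MetricSpace X] (f : X → EReal) : Prop :=
  (∀ x, f x ≠ ⊥ ∧ f x ≠ ⊤) ∧ ∀ x y, |(f x).toReal - (f y).toReal| ≤ dist x y

/-! Each of the four conditions amounts to `f x ≤ f x' + d(x, x')` for all `x, x'`. For (4) this
is the definition unfolded. Taking `x = y` in the supremum gives `-f ≤ f^{-d}` for every `f`, and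
the reverse inequality is the same one-sided Lipschitz bound. A `(-d)`-transform is a supremum of
the 1-Lipschitz functions `-d(·, y) - g(y)`, which gives (3) ⟹ (1); conversely a 1-Lipschitz `f`
is finite, so `-f` is 1-Lipschitz as well and `f = (-f)^{-d}` is `(-d)`-convex. -/

section CTransform

variable {X Y : Type*} [PseudoMetricSpace X]

lemma exists_coe_eq_of_ne_bot_of_ne_top {f : Y → EReal} (hbot : ∀ y, f y ≠ ⊥)
    (htop : ∀ y, f y ≠ ⊤) : ∃ g : Y → ℝ, f = fun y => (g y : EReal) :=
  ⟨fun y => (f y).toReal, funext fun y => (EReal.coe_toReal (htop y) (hbot y)).symm⟩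

lemma sub_le_sub_add_coe {a b c : ℝ} (h : a ≤ b + c) (e : EReal) :
    (a : EReal) - e ≤ ((b : EReal) - e) + c := by
  calc (a : EReal) - e ≤ ((b : EReal) + c) - e := EReal.sub_le_sub (mod_cast h) le_rfl
    _ = ((b : EReal) - e) + c := by simp only [sub_eq_add_neg, add_right_comm]

lemma cTransform_le_add_dist {c : Y → X → ℝ} (hc : ∀ y x x', c y x ≤ c y x' + dist x x')
    (g : Y → EReal) (x x' : X) :
    cTransform c g x ≤ cTransform c g x' + dist x x' :=
  iSup_le fun y =>
    (sub_le_sub_add_coe (hc y x x') (g y)).trans <|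
      add_le_add_left (le_iSup (fun y => (c y x' : EReal) - g y) y) _

end CTransform

section MetricSpace

variable {X : Type*} [MetricSpace X] {f : X → EReal}

lemma isLip1E_coe_iff (g : X → ℝ) :
    IsLip1E (fun x => (g x : EReal)) ↔ ∀ x x', (g x : EReal) ≤ g x' + dist x x' := by
  simp only [IsLip1E, EReal.toReal_coe, abs_sub_le_iff, ← EReal.coe_add, EReal.coe_le_coe_iff,
    ne_eq, EReal.coe_ne_bot, EReal.coe_ne_top, not_false_eq_true, and_self, implies_true,
    true_and]
  refine ⟨fun h x x' => ?_, fun h x x' => ⟨?_, ?_⟩⟩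
  · linarith [(h x x').1]
  · linarith [h x x']
  · linarith [h x' x, dist_comm x x']

lemma IsLip1E.le_add_dist (h : IsLip1E f) (x x' : X) : f x ≤ f x' + dist x x' := by
  obtain ⟨g, rfl⟩ := exists_coe_eq_of_ne_bot_of_ne_top (fun x => (h.1 x).1) (fun x => (h.1 x).2)
  exact (isLip1E_coe_iff g).1 h x x'

lemma isLip1E_of_le_add_dist (hf : ProperFn f) (h : ∀ x x', f x ≤ f x' + dist x x') :
    IsLip1E f := by
  obtain ⟨hbot, x₀, hx₀⟩ := hf
  have htop : ∀ x, f x ≠ ⊤ := fun x =>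
    ne_top_of_le_ne_top (EReal.add_ne_top hx₀ (EReal.coe_ne_top _)) (h x x₀)
  obtain ⟨g, rfl⟩ := exists_coe_eq_of_ne_bot_of_ne_top hbot htop
  exact (isLip1E_coe_iff g).2 h

lemma isLip1E_iff_le_add_dist (hf : ProperFn f) :
    IsLip1E f ↔ ∀ x x', f x ≤ f x' + dist x x' :=
  ⟨IsLip1E.le_add_dist, isLip1E_of_le_add_dist hf⟩

lemma IsLip1E.neg (h : IsLip1E f) : IsLip1E (-f) := by
  refine ⟨fun x => ⟨?_, ?_⟩, fun x y => ?_⟩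
  · simpa [EReal.neg_eq_bot_iff] using (h.1 x).2
  · simpa [EReal.neg_eq_top_iff] using (h.1 x).1
  · simpa [EReal.toReal_neg_eq, neg_add_eq_sub, dist_comm] using h.2 y x

lemma forall_self_mem_cSubdiff_neg_dist_iff :
    (∀ x, x ∈ cSubdiff (fun x y : X => -dist x y) f x) ↔
      ∀ x x', f x ≤ f x' + dist x x' := by
  simp only [cSubdiff, Set.mem_ofPred_eq, dist_self, EReal.coe_zero, sub_zero,
    EReal.coe_neg, ← sub_eq_add_neg,
    EReal.sub_le_iff_le_add (.inl (EReal.coe_ne_bot _)) (.inl (EReal.coe_ne_top _)),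
    dist_comm]

lemma neg_le_cTransform_neg_dist (y : X) : -f y ≤ cTransform (fun x y : X => -dist x y) f y := by
  refine le_of_eq_of_le ?_ (le_iSup (fun x => ((-dist x y : ℝ) : EReal) - f x) y)
  simp

lemma cTransform_neg_dist_eq_neg_iff :
    cTransform (fun x y : X => -dist x y) f = (fun y => -f y) ↔
      ∀ x x', f x ≤ f x' + dist x x' := by
  have hsub (x y : X) : ((-dist x y : ℝ) : EReal) - f x ≤ -f y ↔ f y ≤ f x + dist y x := by
    rw [EReal.le_neg, EReal.neg_sub (.inl (EReal.coe_ne_bot _)) (.inl (EReal.coe_ne_top _)),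
      ← EReal.coe_neg, neg_neg, add_comm, dist_comm]
  refine ⟨fun h y x => (hsub x y).1 ?_, fun h => funext fun y => ?_⟩
  · exact (le_iSup (fun x => ((-dist x y : ℝ) : EReal) - f x) x).trans (congrFun h y).le
  · exact le_antisymm (iSup_le fun x => (hsub x y).2 (h y x)) (neg_le_cTransform_neg_dist y)

lemma IsLip1E.isCConvex_neg_dist (hf : ProperFn f) (h : IsLip1E f) :
    IsCConvex (fun x y : X => -dist x y) f := by
  obtain ⟨x₀, hx₀⟩ := hf.2
  have hneg : ProperFn (-f) :=
    ⟨fun x => EReal.neg_eq_bot_iff.not.2 (h.1 x).2, x₀, EReal.neg_eq_top_iff.not.2 (hf.1 x₀)⟩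
  have hdual := cTransform_neg_dist_eq_neg_iff.2 h.neg.le_add_dist
  simp only [Pi.neg_apply, neg_neg] at hdual
  refine ⟨hf, -f, hneg, ?_⟩
  have hswap : (fun y x : X => -dist x y) = fun x y => -dist x y := by
    funext y x
    rw [dist_comm]
  rw [hswap, hdual]

end MetricSpace

theorem statement15_general {X : Type*} [MetricSpace X]
    (f : X → EReal) (hf : ProperFn f) :
    [IsLip1E f,
      cTransform (fun x y : X => -dist x y) f = fun y => -f y,
      IsCConvex (fun x y : X => -dist x y) f,
      ∀ x : X, x ∈ cSubdiff (fun x y : X => -dist x y) f x].TFAE := by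
  have hlip := isLip1E_iff_le_add_dist hf
  tfae_have 1 ↔ 2 := hlip.trans cTransform_neg_dist_eq_neg_iff.symm
  tfae_have 1 ↔ 4 := hlip.trans forall_self_mem_cSubdiff_neg_dist_iff.symm
  tfae_have 1 → 3 := IsLip1E.isCConvex_neg_dist hf
  tfae_have 3 → 1 := by
    rintro ⟨-, g, -, rfl⟩
    refine isLip1E_of_le_add_dist hf (cTransform_le_add_dist (fun y x x' => ?_) g)
    show -dist x y ≤ -dist x' y + dist x x'
    linarith [dist_triangle_left x' y x]
  tfae_finish

/-- for a proper `f : X → (-∞,+∞]` on a metric space, the following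
are equivalent: (1) `f` is 1-Lipschitz; (2) `f^{-d} = -f`; (3) `f` is `(-d)`-convex;
(4) `f` is a `(-d)`-antiderivative of the identity, i.e. `G(I) ⊆ G(∂_{-d} f)`
(and in any of these cases `f` is real-valued, as recorded in (1)). -/
theorem statement15 {X : Type*} [MetricSpace X] [Nonempty X]
    (f : X → EReal) (hf : ProperFn f) :
    [IsLip1E f,
      cTransform (fun x y : X => -dist x y) f = fun y => -f y,
      IsCConvex (fun x y : X => -dist x y) f,
      ∀ x : X, x ∈ cSubdiff (fun x y : X => -dist x y) f x].TFAE :=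
  statement15_general f hf
end
end

section
/- Let (X,d) be a metric space, let A ⊆ X, let f : A → ℝ be a 1-Lipschitz function, and let M : A ⇉ A be a multivalued mapping such that f(y) − f(x) = d(x,y) for all (x,y) ∈ G(M). Then for any nonempty S ⊆ dom(M), the restriction f|_S extends to a 1-Lipschitz function h : X → ℝ satisfying h(y) − h(x) = d(x,y) for all (x,y) ∈ G(M); moreover, among all such extensions there exist a pointwise minimal one and a pointwise maximal one. -/
/-! McShane's extension `x ↦ inf_a (f a + d(x, a))` shows that the family of admissible
extensions is nonempty. All of its members agree with `f` at a point of `S`, so by the Lipschitz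
bound the family is pointwise bounded, and its pointwise supremum is again admissible: suprema of
1-Lipschitz functions are 1-Lipschitz, and `h y = h x + d(x, y)` passes to suprema. The least
extension is obtained from the greatest one for `-f` and the inverse mapping, since `h ↦ -h`
exchanges the two families. -/

noncomputable section

open scoped Classical

variable {X Y : Type*}

/-- The set of 1-Lipschitz extensions `h : X → ℝ` of `f|_S` which preserve the
distances prescribed by `M`, i.e. `h(y) - h(x) = d(x,y)` for all `(x,y) ∈ G(M)`. -/
def lipExtFamily {X : Type*} [MetricSpace X] (A : Set X) (f : A → ℝ)
    (M : A → Set A) (S : Set A) : Set (X → ℝ) :=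
  { h | (∀ x y : X, |h x - h y| ≤ dist x y) ∧ (∀ s : A, s ∈ S → h s = f s) ∧
      ∀ x y : A, y ∈ M x → h y - h x = dist (x : X) (y : X) }

section Lipschitz

variable [PseudoMetricSpace X]

theorem lipschitzWith_one_iff_abs_sub_le {h : X → ℝ} :
    LipschitzWith 1 h ↔ ∀ x y, |h x - h y| ≤ dist x y := by
  simp [lipschitzWith_iff_dist_le_mul, Real.dist_eq]

theorem LipschitzWith.exists_extension_of_subtype {A : Set X} {f : A → ℝ} {K : NNReal}
    (hf : LipschitzWith K f) : ∃ F : X → ℝ, LipschitzWith K F ∧ ∀ a : A, F a = f a := by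
  have hext : ∀ a : A, Function.extend Subtype.val f 0 a = f a :=
    Subtype.val_injective.extend_apply f 0
  have hon : LipschitzOnWith K (Function.extend Subtype.val f 0) A := by
    rw [lipschitzOnWith_iff_restrict]
    convert hf using 1
    exact funext hext
  obtain ⟨F, hF, hEq⟩ := hon.extend_real
  exact ⟨F, hF, fun a => (hEq a.2).symm.trans (hext a)⟩

variable {ι : Type*} {K : NNReal} {g : ι → X → ℝ}

theorem bddAbove_range_apply_of_lipschitzWith (hg : ∀ i, LipschitzWith K (g i)) {x₀ : X}
    (hx₀ : BddAbove (Set.range fun i => g i x₀)) (x : X) :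
    BddAbove (Set.range fun i => g i x) := by
  obtain ⟨b, hb⟩ := hx₀
  refine ⟨b + K * dist x x₀, ?_⟩
  rintro _ ⟨i, rfl⟩
  have := (hg i).le_add_mul x x₀
  have := hb ⟨i, rfl⟩
  linarith

theorem LipschitzWith.ciSup [Nonempty ι] (hg : ∀ i, LipschitzWith K (g i))
    (hbdd : ∀ x, BddAbove (Set.range fun i => g i x)) :
    LipschitzWith K fun x => ⨆ i, g i x := by
  refine LipschitzWith.of_le_add_mul K fun x y => ?_
  exact ciSup_le fun i => ((hg i).le_add_mul x y).trans (by gcongr; exact le_ciSup (hbdd y) i)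

end Lipschitz

section LipExtFamily

variable [MetricSpace X] {A : Set X} {f : A → ℝ} {M : A → Set A} {S : Set A}

theorem lipExtFamily_nonempty (hf : ∀ x y : A, |f x - f y| ≤ dist (x : X) (y : X))
    (hM : ∀ x y : A, y ∈ M x → f y - f x = dist (x : X) (y : X)) :
    (lipExtFamily A f M S).Nonempty := by
  obtain ⟨F, hF, hFf⟩ := (lipschitzWith_one_iff_abs_sub_le.2 hf).exists_extension_of_subtype
  refine ⟨F, lipschitzWith_one_iff_abs_sub_le.1 hF, fun s _ => hFf s, fun x y hxy => ?_⟩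
  rw [hFf, hFf]
  exact hM x y hxy

theorem exists_greatest_mem_lipExtFamily (hne : (lipExtFamily A f M S).Nonempty)
    (hS : S.Nonempty) :
    ∃ hmax ∈ lipExtFamily A f M S, ∀ h ∈ lipExtFamily A f M S, ∀ x, h x ≤ hmax x := by
  obtain ⟨s, hs⟩ := hS
  have : Nonempty (lipExtFamily A f M S) := hne.to_subtype
  have hlip : ∀ h : lipExtFamily A f M S, LipschitzWith 1 (h : X → ℝ) := fun h =>
    lipschitzWith_one_iff_abs_sub_le.2 h.2.1
  have hbdd : ∀ x, BddAbove (Set.range fun h : lipExtFamily A f M S => (h : X → ℝ) x) :=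
    bddAbove_range_apply_of_lipschitzWith hlip (x₀ := s)
      ⟨f s, by rintro _ ⟨h, rfl⟩; exact (h.2.2.1 s hs).le⟩
  refine ⟨fun x => ⨆ h : lipExtFamily A f M S, (h : X → ℝ) x,
    ⟨lipschitzWith_one_iff_abs_sub_le.1 (LipschitzWith.ciSup hlip hbdd), fun t ht => ?_,
      fun x y hxy => ?_⟩, fun h hh x => le_ciSup (hbdd x) ⟨h, hh⟩⟩
  · simp only [fun h : lipExtFamily A f M S => h.2.2.1 t ht, ciSup_const]
  · have hstep : ∀ h : lipExtFamily A f M S,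
        (h : X → ℝ) y = (h : X → ℝ) x + dist (x : X) (y : X) := fun h =>
      eq_add_of_sub_eq' (h.2.2.2 x y hxy)
    simp only [hstep, ← ciSup_add (hbdd x), add_sub_cancel_left]

theorem neg_mem_lipExtFamily_iff {h : X → ℝ} :
    -h ∈ lipExtFamily A (-f) (mapInv M) S ↔ h ∈ lipExtFamily A f M S := by
  simp only [lipExtFamily, mapInv, Set.mem_ofPred_eq, Pi.neg_apply, neg_inj, neg_sub_neg]
  refine and_congr (forall₂_congr fun x y => by rw [abs_sub_comm]) (and_congr Iff.rfl ?_)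
  rw [forall_comm]
  exact forall₂_congr fun x y => by rw [dist_comm]

theorem exists_least_mem_lipExtFamily (hne : (lipExtFamily A f M S).Nonempty)
    (hS : S.Nonempty) :
    ∃ hmin ∈ lipExtFamily A f M S, ∀ h ∈ lipExtFamily A f M S, ∀ x, hmin x ≤ h x := by
  obtain ⟨F, hF⟩ := hne
  obtain ⟨g, hg, hgmax⟩ := exists_greatest_mem_lipExtFamily
    ⟨-F, neg_mem_lipExtFamily_iff.2 hF⟩ hS
  exact ⟨-g, neg_mem_lipExtFamily_iff.1 (by rwa [neg_neg]), fun h hh x =>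
    neg_le.1 (hgmax (-h) (neg_mem_lipExtFamily_iff.2 hh) x)⟩

end LipExtFamily

theorem statement17_general {X : Type*} [MetricSpace X] (A : Set X) (f : A → ℝ)
    (hf : ∀ x y : A, |f x - f y| ≤ dist (x : X) (y : X))
    (M : A → Set A)
    (hM : ∀ x y : A, y ∈ M x → f y - f x = dist (x : X) (y : X))
    (S : Set A) (hS : S.Nonempty) :
    (lipExtFamily A f M S).Nonempty ∧
      (∃ hmin ∈ lipExtFamily A f M S,
        ∀ h ∈ lipExtFamily A f M S, ∀ x, hmin x ≤ h x) ∧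
      ∃ hmax ∈ lipExtFamily A f M S,
        ∀ h ∈ lipExtFamily A f M S, ∀ x, h x ≤ hmax x :=
  have hne := lipExtFamily_nonempty (S := S) hf hM
  ⟨hne, exists_least_mem_lipExtFamily hne hS, exists_greatest_mem_lipExtFamily hne hS⟩

/-- if `f : A → ℝ` is 1-Lipschitz, `M : A ⇉ A` satisfies
`f(y) - f(x) = d(x,y)` on `G(M)`, and `∅ ≠ S ⊆ dom M`, then `f|_S` extends to a
1-Lipschitz `h : X → ℝ` with `h(y) - h(x) = d(x,y)` on `G(M)`; moreover there exist a
pointwise minimal and a pointwise maximal such extension. -/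
theorem statement17 {X : Type*} [MetricSpace X] (A : Set X) (f : A → ℝ)
    (hf : ∀ x y : A, |f x - f y| ≤ dist (x : X) (y : X))
    (M : A → Set A)
    (hM : ∀ x y : A, y ∈ M x → f y - f x = dist (x : X) (y : X))
    (S : Set A) (hS : S.Nonempty) (hSdom : S ⊆ mapDom M) :
    (lipExtFamily A f M S).Nonempty ∧
      (∃ hmin ∈ lipExtFamily A f M S,
        ∀ h ∈ lipExtFamily A f M S, ∀ x, hmin x ≤ h x) ∧
      ∃ hmax ∈ lipExtFamily A f M S,
        ∀ h ∈ lipExtFamily A f M S, ∀ x, h x ≤ hmax x :=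
  statement17_general A f hf M hM S hS
end
end
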